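/- arXiv:1303.4202 — 7 statements merged into one kernel-verified Lean document; each statement's English description precedes it below -/
import Mathlib

section
/- If D: T → T is a derivation on the order-three triangular algebra, then D(E_B) = [[0, −m_D, 0],[0, 0, n_D],[0,0,0]] for some n_D ∈ N, where E_B = diag(0,1_B,0) and m_D is the (1,2)-entry of D(E_A); and for every b ∈ B, D([[0,0,0],[0,b,0],[0,0,0]]) = [[0, −m_D·b, 0],[0, D_B(b), b·n_D],[0,0,0]] with D_B a derivation on B. -/
open MulOpposite

/-- Formal upper-triangular 3×3 matrix `[[a,m,p],[0,b,n],[0,0,c]]`. -/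
structure Tri (A M P B N C : Type*) where
  a : A
  m : M
  p : P
  b : B
  n : N
  c : C

namespace Tri

variable {A B C M N P : Type*}

/-- Entrywise addition. -/
def add [Add A] [Add B] [Add C] [Add M] [Add N] [Add P]
    (x y : Tri A M P B N C) : Tri A M P B N C :=
  ⟨x.a + y.a, x.m + y.m, x.p + y.p, x.b + y.b, x.n + y.n, x.c + y.c⟩

/-- Entrywise negation. -/
def neg [Neg A] [Neg B] [Neg C] [Neg M] [Neg N] [Neg P]
    (x : Tri A M P B N C) : Tri A M P B N C :=
  ⟨-x.a, -x.m, -x.p, -x.b, -x.n, -x.c⟩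

/-- The triangular multiplication determined by the pairing `μ : M → N → P`;
right module actions are written via the multiplicative opposite. -/
def mul [Mul A] [Mul B] [Mul C] [Add M] [Add N] [Add P]
    [SMul A M] [SMul Bᵐᵒᵖ M] [SMul B N] [SMul Cᵐᵒᵖ N] [SMul A P] [SMul Cᵐᵒᵖ P]
    (μ : M → N → P) (x y : Tri A M P B N C) : Tri A M P B N C :=
  ⟨x.a * y.a, x.a • y.m + op y.b • x.m,
   x.a • y.p + μ x.m y.n + op y.c • x.p,
   x.b * y.b, x.b • y.n + op y.c • x.n, x.c * y.c⟩

end Tri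

variable {A B C M N P : Type*} [Ring A] [Ring B] [Ring C]
  [AddCommGroup M] [AddCommGroup N] [AddCommGroup P]
  [Module A M] [Module Bᵐᵒᵖ M] [SMulCommClass A Bᵐᵒᵖ M]
  [Module B N] [Module Cᵐᵒᵖ N] [SMulCommClass B Cᵐᵒᵖ N]
  [Module A P] [Module Cᵐᵒᵖ P] [SMulCommClass A Cᵐᵒᵖ P]

/-- with `m_D` the `(1,2)`-entry of `D(E_A)`, there are `n_D ∈ N` and a
derivation `D_B` of `B` with `D(E_B) = [[0,-m_D,0],[0,0,n_D],[0,0,0]]` and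
`D([[0,0,0],[0,b,0],[0,0,0]]) = [[0,-m_D·b,0],[0,D_B(b),b·n_D],[0,0,0]]`. -/
theorem derivation_on_B_corner
    (μ : M → N → P)
    (hμ_addl : ∀ (m₁ m₂ : M) (n : N), μ (m₁ + m₂) n = μ m₁ n + μ m₂ n)
    (hμ_addr : ∀ (m : M) (n₁ n₂ : N), μ m (n₁ + n₂) = μ m n₁ + μ m n₂)
    (hμA : ∀ (a : A) (m : M) (n : N), μ (a • m) n = a • μ m n)
    (hμC : ∀ (m : M) (n : N) (c : C), μ m (op c • n) = op c • μ m n)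
    (hμbal : ∀ (m : M) (b : B) (n : N), μ (op b • m) n = μ m (b • n))
    (D : Tri A M P B N C → Tri A M P B N C)
    (hD_add : ∀ x y, D (Tri.add x y) = Tri.add (D x) (D y))
    (hD_mul : ∀ x y, D (Tri.mul μ x y) = Tri.add (Tri.mul μ (D x) y) (Tri.mul μ x (D y)))
    (mD : M) (pD : P)
    (hEA : D ⟨1, 0, 0, 0, 0, 0⟩ = ⟨0, mD, pD, 0, 0, 0⟩) :
    ∃ (nD : N) (DB : B → B),
      D ⟨0, 0, 0, 1, 0, 0⟩ = ⟨0, -mD, 0, 0, nD, 0⟩ ∧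
      (∀ b₁ b₂ : B, DB (b₁ + b₂) = DB b₁ + DB b₂) ∧
      (∀ b₁ b₂ : B, DB (b₁ * b₂) = DB b₁ * b₂ + b₁ * DB b₂) ∧
      (∀ b : B, D ⟨0, 0, 0, b, 0, 0⟩ = ⟨0, -(op b • mD), 0, DB b, b • nD, 0⟩) := by
  have hμ0r : ∀ m : M, μ m 0 = 0 := by
    intro m
    have h := hμ_addr m 0 0
    rw [add_zero] at h
    exact (left_eq_add.mp h)
  have hμ0l : ∀ n : N, μ 0 n = 0 := by
    intro n
    have h := hμ_addl 0 0 n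
    rw [add_zero] at h
    exact (left_eq_add.mp h)
  have hD0 : D ⟨0,0,0,0,0,0⟩ = ⟨0,0,0,0,0,0⟩ := by
    rcases hz : D ⟨0,0,0,0,0,0⟩ with ⟨a, m, p, b, n, c⟩
    have h := hD_add ⟨0,0,0,0,0,0⟩ ⟨0,0,0,0,0,0⟩
    simp only [Tri.add, add_zero, hz, Tri.mk.injEq] at h
    obtain ⟨h1, h2, h3, h4, h5, h6⟩ := h
    simp only [Tri.mk.injEq]
    exact ⟨left_eq_add.mp h1, left_eq_add.mp h2, left_eq_add.mp h3,
      left_eq_add.mp h4, left_eq_add.mp h5, left_eq_add.mp h6⟩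
  rcases hEB : D ⟨0,0,0,1,0,0⟩ with ⟨α, m', p', β, n', γ⟩
  -- relation from E_A * E_B = 0
  have h1 := hD_mul ⟨1,0,0,0,0,0⟩ ⟨0,0,0,1,0,0⟩
  simp only [Tri.mul, Tri.add, hEA, hEB, hD0, hμ0r, hμ0l, zero_mul, mul_zero, one_mul,
    mul_one, zero_smul, smul_zero, op_zero, op_one, one_smul, add_zero, zero_add,
    Tri.mk.injEq] at h1
  obtain ⟨hα, hm', hp', -, -, -⟩ := h1
  -- relation from E_B * E_B = E_B
  have h2 := hD_mul ⟨0,0,0,1,0,0⟩ ⟨0,0,0,1,0,0⟩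
  simp only [Tri.mul, Tri.add, hEB, hD0, hμ0r, hμ0l, zero_mul, mul_zero, one_mul,
    mul_one, zero_smul, smul_zero, op_zero, op_one, one_smul, add_zero, zero_add,
    Tri.mk.injEq] at h2
  obtain ⟨-, -, -, hβ, -, hγ⟩ := h2
  have hα0 : α = 0 := hα.symm
  have hβ0 : β = 0 := left_eq_add.mp hβ
  have hγ0 : γ = 0 := by simpa using hγ
  have hm'0 : m' = -mD := by
    rw [eq_neg_iff_add_eq_zero, add_comm]
    exact hm'.symm
  have hp'0 : p' = 0 := hp'.symm
  subst hα0 hβ0 hγ0 hm'0 hp'0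
  refine ⟨n', fun b => (D ⟨0,0,0,b,0,0⟩).b, rfl, ?_, ?_, ?_⟩
  · intro b₁ b₂
    have h := hD_add ⟨0,0,0,b₁,0,0⟩ ⟨0,0,0,b₂,0,0⟩
    have hb := congrArg Tri.b h
    simpa [Tri.add] using hb
  · intro b₁ b₂
    have h := hD_mul ⟨0,0,0,b₁,0,0⟩ ⟨0,0,0,b₂,0,0⟩
    have hb := congrArg Tri.b h
    simpa [Tri.add, Tri.mul, hμ0l] using hb
  · intro b
    rcases hX : D ⟨0,0,0,b,0,0⟩ with ⟨ab, mb, pb, bb, nb, cb⟩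
    -- from E_A * X_b = 0
    have hA := hD_mul ⟨1,0,0,0,0,0⟩ ⟨0,0,0,b,0,0⟩
    simp only [Tri.mul, Tri.add, hEA, hX, hD0, hμ0r, hμ0l, zero_mul, mul_zero, one_mul,
      mul_one, zero_smul, smul_zero, op_zero, op_one, one_smul, add_zero, zero_add,
      Tri.mk.injEq] at hA
    obtain ⟨ha, hm, hp, -, -, -⟩ := hA
    -- from X_b * E_B = X_b
    have hB := hD_mul ⟨0,0,0,b,0,0⟩ ⟨0,0,0,1,0,0⟩
    simp only [Tri.mul, Tri.add, hEB, hX, hD0, hμ0r, hμ0l, zero_mul, mul_zero, one_mul,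
      mul_one, zero_smul, smul_zero, op_zero, op_one, one_smul, add_zero, zero_add,
      Tri.mk.injEq] at hB
    obtain ⟨-, -, -, -, hn, hc⟩ := hB
    simp only [Tri.mk.injEq]
    refine ⟨ha.symm, ?_, hp.symm, (congrArg Tri.b hX).symm, ?_, ?_⟩
    · rw [eq_neg_iff_add_eq_zero, add_comm]
      exact hm.symm
    · exact hn
    · simpa using hc
end

section
/- If D: T → T is a derivation on the order-three triangular algebra, then for every m ∈ M there is τ_M(m) ∈ M with D([[0,m,0],[0,0,0],[0,0,0]]) = [[0, τ_M(m), μ(m, n_D)],[0,0,0],[0,0,0]], where n_D is the (2,3)-entry of D(E_B); in particular, the A-, B-, C-diagonal entries and the N-entry of D applied to an M-corner element vanish, and the P-entry is determined by μ(m, n_D). -/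
/-!
Let `x` be the `M`-corner element with entry `m`. Since `x = x E_B`, the Leibniz rule gives
`D x = (D x) E_B + x D(E_B)`. Right multiplication by `E_B` keeps only the `M`- and `B`-entries
of `D x`, while `x D(E_B)` lives in the first row with `P`-entry `μ(m, n_D)`. The `B`-entry of
`D x` vanishes too: `x = E_A x`, and both `D(E_A) x` and `E_A D(x)` have zero `B`-entry.
-/

open MulOpposite

namespace Tri

variable {A B C M N P : Type*} [Ring A] [Ring B] [Ring C]
  [AddCommGroup M] [AddCommGroup N] [AddCommGroup P]
  [Module A M] [Module Bᵐᵒᵖ M] [Module B N] [Module Cᵐᵒᵖ N] [Module A P] [Module Cᵐᵒᵖ P]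

theorem mul_eB (μ : M → N → P) (x : Tri A M P B N C) (hx : μ x.m 0 = 0) :
    Tri.mul μ x ⟨0, 0, 0, 1, 0, 0⟩ = ⟨0, x.m, 0, x.b, 0, 0⟩ := by
  simp [Tri.mul, hx]

theorem cornerM_mul (μ : M → N → P) (m : M) (y : Tri A M P B N C) :
    Tri.mul μ ⟨0, m, 0, 0, 0, 0⟩ y = ⟨0, op y.b • m, μ m y.n, 0, 0, 0⟩ := by
  simp [Tri.mul]

theorem eA_mul_cornerM (μ : M → N → P) (m : M) (h : μ 0 0 = 0) :
    Tri.mul μ (⟨1, 0, 0, 0, 0, 0⟩ : Tri A M P B N C) ⟨0, m, 0, 0, 0, 0⟩ = ⟨0, m, 0, 0, 0, 0⟩ := by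
  simp [Tri.mul, h]

end Tri

variable {A B C M N P : Type*} [Ring A] [Ring B] [Ring C]
  [AddCommGroup M] [AddCommGroup N] [AddCommGroup P]
  [Module A M] [Module Bᵐᵒᵖ M] [SMulCommClass A Bᵐᵒᵖ M]
  [Module B N] [Module Cᵐᵒᵖ N] [SMulCommClass B Cᵐᵒᵖ N]
  [Module A P] [Module Cᵐᵒᵖ P] [SMulCommClass A Cᵐᵒᵖ P]

theorem derivation_on_M_corner_general
    (μ : M → N → P)
    (hμ_addr : ∀ (m : M) (n₁ n₂ : N), μ m (n₁ + n₂) = μ m n₁ + μ m n₂)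
    (D : Tri A M P B N C → Tri A M P B N C)
    (hD_mul : ∀ x y, D (Tri.mul μ x y) = Tri.add (Tri.mul μ (D x) y) (Tri.mul μ x (D y)))
    (nD : N)
    (hnD : (D ⟨0, 0, 0, 1, 0, 0⟩).n = nD) :
    ∀ m : M, ∃ τ : M,
      D ⟨0, m, 0, 0, 0, 0⟩ = ⟨0, τ, μ m nD, 0, 0, 0⟩ := by
  intro m
  have hμ_zero (m' : M) : μ m' 0 = 0 := (AddMonoidHom.mk' (μ m') (hμ_addr m')).map_zero
  have hb : (D ⟨0, m, 0, 0, 0, 0⟩).b = 0 := by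
    have h := congrArg Tri.b (hD_mul ⟨1, 0, 0, 0, 0, 0⟩ ⟨0, m, 0, 0, 0, 0⟩)
    rw [Tri.eA_mul_cornerM μ m (hμ_zero 0)] at h
    simpa [Tri.add, Tri.mul] using h
  have hLeibniz := hD_mul ⟨0, m, 0, 0, 0, 0⟩ ⟨0, 0, 0, 1, 0, 0⟩
  rw [Tri.mul_eB μ _ (hμ_zero m), Tri.mul_eB μ _ (hμ_zero _), Tri.cornerM_mul, hnD, hb] at hLeibniz
  dsimp only at hLeibniz
  refine ⟨(D ⟨0, m, 0, 0, 0, 0⟩).m + op (D ⟨0, 0, 0, 1, 0, 0⟩).b • m, hLeibniz.trans ?_⟩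
  simp only [Tri.add, add_zero, zero_add]

/-- with `n_D` the `(2,3)`-entry of `D(E_B)`, for every `m ∈ M` the image of
the `M`-corner element is `[[0, τ_M(m), μ(m,n_D)],[0,0,0],[0,0,0]]` for some `τ_M(m) ∈ M`. -/
theorem derivation_on_M_corner
    (μ : M → N → P)
    (hμ_addl : ∀ (m₁ m₂ : M) (n : N), μ (m₁ + m₂) n = μ m₁ n + μ m₂ n)
    (hμ_addr : ∀ (m : M) (n₁ n₂ : N), μ m (n₁ + n₂) = μ m n₁ + μ m n₂)
    (hμA : ∀ (a : A) (m : M) (n : N), μ (a • m) n = a • μ m n)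
    (hμC : ∀ (m : M) (n : N) (c : C), μ m (op c • n) = op c • μ m n)
    (hμbal : ∀ (m : M) (b : B) (n : N), μ (op b • m) n = μ m (b • n))
    (D : Tri A M P B N C → Tri A M P B N C)
    (hD_add : ∀ x y, D (Tri.add x y) = Tri.add (D x) (D y))
    (hD_mul : ∀ x y, D (Tri.mul μ x y) = Tri.add (Tri.mul μ (D x) y) (Tri.mul μ x (D y)))
    (nD : N)
    (hnD : (D ⟨0, 0, 0, 1, 0, 0⟩).n = nD) :
    ∀ m : M, ∃ τ : M,
      D ⟨0, m, 0, 0, 0, 0⟩ = ⟨0, τ, μ m nD, 0, 0, 0⟩ :=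
  derivation_on_M_corner_general μ hμ_addr D hD_mul nD hnD
end

section
/- If D: T → T is a derivation on the order-three triangular algebra, then for every n ∈ N, D([[0,0,0],[0,0,n],[0,0,0]]) = [[0, 0, −μ(m_D, n)],[0, 0, τ_N(n)],[0,0,0]] for some linear map τ_N: N → N, where m_D is the (1,2)-entry of D(E_A); and for every p ∈ P, D([[0,0,p],[0,0,0],[0,0,0]]) = [[0,0,τ_P(p)],[0,0,0],[0,0,0]] for some linear map τ_P: P → P. -/
open MulOpposite

variable {A B C M N P : Type*} [Ring A] [Ring B] [Ring C]
  [AddCommGroup M] [AddCommGroup N] [AddCommGroup P]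
  [Module A M] [Module Bᵐᵒᵖ M] [SMulCommClass A Bᵐᵒᵖ M]
  [Module B N] [Module Cᵐᵒᵖ N] [SMulCommClass B Cᵐᵒᵖ N]
  [Module A P] [Module Cᵐᵒᵖ P] [SMulCommClass A Cᵐᵒᵖ P]

/-- with `m_D` the `(1,2)`-entry of `D(E_A)`, there are linear maps
`τ_N : N → N` and `τ_P : P → P` such that
`D([[0,0,0],[0,0,n],[0,0,0]]) = [[0,0,-μ(m_D,n)],[0,0,τ_N(n)],[0,0,0]]` and
`D([[0,0,p],[0,0,0],[0,0,0]]) = [[0,0,τ_P(p)],[0,0,0],[0,0,0]]`. -/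
theorem derivation_on_N_and_P_corners
    (μ : M → N → P)
    (hμ_addl : ∀ (m₁ m₂ : M) (n : N), μ (m₁ + m₂) n = μ m₁ n + μ m₂ n)
    (hμ_addr : ∀ (m : M) (n₁ n₂ : N), μ m (n₁ + n₂) = μ m n₁ + μ m n₂)
    (hμA : ∀ (a : A) (m : M) (n : N), μ (a • m) n = a • μ m n)
    (hμC : ∀ (m : M) (n : N) (c : C), μ m (op c • n) = op c • μ m n)
    (hμbal : ∀ (m : M) (b : B) (n : N), μ (op b • m) n = μ m (b • n))
    (D : Tri A M P B N C → Tri A M P B N C)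
    (hD_add : ∀ x y, D (Tri.add x y) = Tri.add (D x) (D y))
    (hD_mul : ∀ x y, D (Tri.mul μ x y) = Tri.add (Tri.mul μ (D x) y) (Tri.mul μ x (D y)))
    (mD : M)
    (hmD : (D ⟨1, 0, 0, 0, 0, 0⟩).m = mD) :
    (∃ τN : N → N,
      (∀ n₁ n₂ : N, τN (n₁ + n₂) = τN n₁ + τN n₂) ∧
      (∀ n : N, D ⟨0, 0, 0, 0, n, 0⟩ = ⟨0, 0, -μ mD n, 0, τN n, 0⟩)) ∧
    (∃ τP : P → P,
      (∀ p₁ p₂ : P, τP (p₁ + p₂) = τP p₁ + τP p₂) ∧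
      (∀ p : P, D ⟨0, 0, p, 0, 0, 0⟩ = ⟨0, 0, τP p, 0, 0, 0⟩)) := by

  classical
  -- basic facts about μ
  have μ0l : ∀ n : N, μ 0 n = 0 := fun n => by
    have h := hμ_addl 0 0 n
    rw [add_zero] at h
    exact (left_eq_add.mp h)
  have μ0r : ∀ m : M, μ m 0 = 0 := fun m => by
    have h := hμ_addr m 0 0
    rw [add_zero] at h
    exact (left_eq_add.mp h)
  have μnegl : ∀ (m : M) (n : N), μ (-m) n = -μ m n := fun m n => by
    have h := hμ_addl m (-m) n
    rw [add_neg_cancel, μ0l] at h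
    exact eq_neg_of_add_eq_zero_right h.symm
  -- D of zero is zero
  have hDz : D (⟨0,0,0,0,0,0⟩ : Tri A M P B N C) = ⟨0,0,0,0,0,0⟩ := by
    have h := hD_add ⟨0,0,0,0,0,0⟩ ⟨0,0,0,0,0,0⟩
    simp only [Tri.add, add_zero] at h
    rcases hE : D (⟨0,0,0,0,0,0⟩ : Tri A M P B N C) with ⟨a0,m0,p0,b0,n0,c0⟩
    rw [hE] at h
    simp only [Tri.add, Tri.mk.injEq] at h
    obtain ⟨h1,h2,h3,h4,h5,h6⟩ := h
    simp [left_eq_add.mp h1, left_eq_add.mp h2, left_eq_add.mp h3,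
      left_eq_add.mp h4, left_eq_add.mp h5, left_eq_add.mp h6]
  -- the m-entry of D(E_B) is -mD
  have he12 : Tri.mul μ (⟨1,0,0,0,0,0⟩ : Tri A M P B N C) ⟨0,0,0,1,0,0⟩
      = ⟨0,0,0,0,0,0⟩ := by
    simp [Tri.mul, μ0l]
  have hDe2m : (D (⟨0,0,0,1,0,0⟩ : Tri A M P B N C)).m = -mD := by
    have hkey := hD_mul ⟨1,0,0,0,0,0⟩ ⟨0,0,0,1,0,0⟩
    rw [he12, hDz] at hkey
    have hm := congrArg Tri.m hkey
    simp only [Tri.add, Tri.mul, smul_zero, op_one, one_smul, zero_add, add_zero] at hm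
    rw [hmD] at hm
    exact eq_neg_of_add_eq_zero_right hm.symm
  constructor
  · -- the N corner
    refine ⟨fun n => (D (⟨0,0,0,0,n,0⟩ : Tri A M P B N C)).n, ?_, ?_⟩
    · intro n₁ n₂
      have h := hD_add ⟨0,0,0,0,n₁,0⟩ ⟨0,0,0,0,n₂,0⟩
      have hx : Tri.add (⟨0,0,0,0,n₁,0⟩ : Tri A M P B N C) ⟨0,0,0,0,n₂,0⟩
          = ⟨0,0,0,0,n₁+n₂,0⟩ := by simp [Tri.add]
      rw [hx] at h
      have := congrArg Tri.n h
      simpa [Tri.add] using this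
    · intro n
      rcases hX : D (⟨0,0,0,0,n,0⟩ : Tri A M P B N C) with ⟨xa,xm,xp,xb,xn,xc⟩
      -- X = E_B * X
      have h1 : Tri.mul μ (⟨0,0,0,1,0,0⟩ : Tri A M P B N C) ⟨0,0,0,0,n,0⟩
          = ⟨0,0,0,0,n,0⟩ := by simp [Tri.mul, μ0l]
      have h2 := hD_mul ⟨0,0,0,1,0,0⟩ ⟨0,0,0,0,n,0⟩
      rw [h1, hX] at h2
      have ha := congrArg Tri.a h2
      have hm := congrArg Tri.m h2
      have hp := congrArg Tri.p h2
      have hc := congrArg Tri.c h2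
      simp only [Tri.add, Tri.mul, smul_zero, zero_smul, op_zero, mul_zero, zero_mul,
        mul_one, one_mul, one_smul, add_zero, zero_add, μ0l, μ0r] at ha hm hp hc
      -- X = X * E_C
      have h3 : Tri.mul μ (⟨0,0,0,0,n,0⟩ : Tri A M P B N C) ⟨0,0,0,0,0,1⟩
          = ⟨0,0,0,0,n,0⟩ := by simp [Tri.mul, μ0l, μ0r]
      have h4 := hD_mul ⟨0,0,0,0,n,0⟩ ⟨0,0,0,0,0,1⟩
      rw [h3, hX] at h4
      have hb := congrArg Tri.b h4
      simp only [Tri.add, Tri.mul, smul_zero, zero_smul, op_zero, mul_zero, zero_mul,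
        mul_one, one_mul, one_smul, add_zero, zero_add] at hb
      rw [hDe2m, μnegl] at hp
      simp [Tri.mk.injEq, ha, hm, hp, hb, hc, hX]
  · -- the P corner
    refine ⟨fun p => (D (⟨0,0,p,0,0,0⟩ : Tri A M P B N C)).p, ?_, ?_⟩
    · intro p₁ p₂
      have h := hD_add ⟨0,0,p₁,0,0,0⟩ ⟨0,0,p₂,0,0,0⟩
      have hx : Tri.add (⟨0,0,p₁,0,0,0⟩ : Tri A M P B N C) ⟨0,0,p₂,0,0,0⟩
          = ⟨0,0,p₁+p₂,0,0,0⟩ := by simp [Tri.add]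
      rw [hx] at h
      have := congrArg Tri.p h
      simpa [Tri.add] using this
    · intro p
      rcases hY : D (⟨0,0,p,0,0,0⟩ : Tri A M P B N C) with ⟨ya,ym,yp,yb,yn,yc⟩
      -- Y = E_A * Y
      have h1 : Tri.mul μ (⟨1,0,0,0,0,0⟩ : Tri A M P B N C) ⟨0,0,p,0,0,0⟩
          = ⟨0,0,p,0,0,0⟩ := by simp [Tri.mul, μ0l, μ0r]
      have h2 := hD_mul ⟨1,0,0,0,0,0⟩ ⟨0,0,p,0,0,0⟩
      rw [h1, hY] at h2
      have hb := congrArg Tri.b h2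
      have hn := congrArg Tri.n h2
      have hc := congrArg Tri.c h2
      simp only [Tri.add, Tri.mul, smul_zero, zero_smul, op_zero, mul_zero, zero_mul,
        mul_one, one_mul, one_smul, add_zero, zero_add, μ0l, μ0r] at hb hn hc
      -- Y = Y * E_C
      have h3 : Tri.mul μ (⟨0,0,p,0,0,0⟩ : Tri A M P B N C) ⟨0,0,0,0,0,1⟩
          = ⟨0,0,p,0,0,0⟩ := by simp [Tri.mul, μ0l, μ0r]
      have h4 := hD_mul ⟨0,0,p,0,0,0⟩ ⟨0,0,0,0,0,1⟩
      rw [h3, hY] at h4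
      have ha := congrArg Tri.a h4
      have hm := congrArg Tri.m h4
      simp only [Tri.add, Tri.mul, smul_zero, zero_smul, op_zero, mul_zero, zero_mul,
        mul_one, one_mul, one_smul, add_zero, zero_add, μ0l, μ0r] at ha hm
      simp [Tri.mk.injEq, ha, hm, hb, hn, hc, hY]
end

section
/- Every derivation D on the order-three triangular algebra T has the form D([[a,m,p],[0,b,n],[0,0,c]]) = [[D_A(a), a·m_D − m_D·b + τ_M(m), a·p_D − p_D·c − μ(m_D,n) + μ(m,n_D) + τ_P(p)],[0, D_B(b), b·n_D − n_D·c + τ_N(n)],[0, 0, D_C(c)]], where D_A, D_B, D_C are derivations on A, B, C respectively, τ_M, τ_P, τ_N are linear maps on M, P, N, and m_D ∈ M, p_D ∈ P, n_D ∈ N. -/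
open MulOpposite

variable {A B C M N P : Type*} [Ring A] [Ring B] [Ring C]
  [AddCommGroup M] [AddCommGroup N] [AddCommGroup P]
  [Module A M] [Module Bᵐᵒᵖ M] [SMulCommClass A Bᵐᵒᵖ M]
  [Module B N] [Module Cᵐᵒᵖ N] [SMulCommClass B Cᵐᵒᵖ N]
  [Module A P] [Module Cᵐᵒᵖ P] [SMulCommClass A Cᵐᵒᵖ P]


theorem Tri.ext' {A M P B N C : Type*} {x y : Tri A M P B N C}
    (ha : x.a = y.a) (hm : x.m = y.m) (hp : x.p = y.p) (hb : x.b = y.b)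
    (hn : x.n = y.n) (hc : x.c = y.c) : x = y := by
  cases x; cases y
  cases ha; cases hm; cases hp; cases hb; cases hn; cases hc; rfl

/-- canonical form of a derivation of the order-three triangular algebra. -/
theorem derivation_canonical_form
    (μ : M → N → P)
    (hμ_addl : ∀ (m₁ m₂ : M) (n : N), μ (m₁ + m₂) n = μ m₁ n + μ m₂ n)
    (hμ_addr : ∀ (m : M) (n₁ n₂ : N), μ m (n₁ + n₂) = μ m n₁ + μ m n₂)
    (hμA : ∀ (a : A) (m : M) (n : N), μ (a • m) n = a • μ m n)
    (hμC : ∀ (m : M) (n : N) (c : C), μ m (op c • n) = op c • μ m n)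
    (hμbal : ∀ (m : M) (b : B) (n : N), μ (op b • m) n = μ m (b • n))
    (D : Tri A M P B N C → Tri A M P B N C)
    (hD_add : ∀ x y, D (Tri.add x y) = Tri.add (D x) (D y))
    (hD_mul : ∀ x y, D (Tri.mul μ x y) = Tri.add (Tri.mul μ (D x) y) (Tri.mul μ x (D y))) :
    ∃ (DA : A → A) (DB : B → B) (DC : C → C)
      (τM : M → M) (τP : P → P) (τN : N → N) (mD : M) (pD : P) (nD : N),
      (∀ a₁ a₂ : A, DA (a₁ + a₂) = DA a₁ + DA a₂) ∧
      (∀ a₁ a₂ : A, DA (a₁ * a₂) = DA a₁ * a₂ + a₁ * DA a₂) ∧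
      (∀ b₁ b₂ : B, DB (b₁ + b₂) = DB b₁ + DB b₂) ∧
      (∀ b₁ b₂ : B, DB (b₁ * b₂) = DB b₁ * b₂ + b₁ * DB b₂) ∧
      (∀ c₁ c₂ : C, DC (c₁ + c₂) = DC c₁ + DC c₂) ∧
      (∀ c₁ c₂ : C, DC (c₁ * c₂) = DC c₁ * c₂ + c₁ * DC c₂) ∧
      (∀ m₁ m₂ : M, τM (m₁ + m₂) = τM m₁ + τM m₂) ∧
      (∀ p₁ p₂ : P, τP (p₁ + p₂) = τP p₁ + τP p₂) ∧
      (∀ n₁ n₂ : N, τN (n₁ + n₂) = τN n₁ + τN n₂) ∧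
      (∀ t : Tri A M P B N C,
        D t = ⟨DA t.a,
               t.a • mD - op t.b • mD + τM t.m,
               t.a • pD - op t.c • pD - μ mD t.n + μ t.m nD + τP t.p,
               DB t.b,
               t.b • nD - op t.c • nD + τN t.n,
               DC t.c⟩) := by

  have hμ0l : ∀ n : N, μ 0 n = 0 := by
    intro n; have h := hμ_addl 0 0 n; rw [add_zero] at h
    exact (left_eq_add.mp h)
  have hμ0r : ∀ m : M, μ m 0 = 0 := by
    intro m; have h := hμ_addr m 0 0; rw [add_zero] at h
    exact (left_eq_add.mp h)
  have hμnegl : ∀ (m : M) (n : N), μ (-m) n = -(μ m n) := by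
    intro m n
    have h := hμ_addl m (-m) n
    rw [add_neg_cancel, hμ0l] at h
    exact (eq_neg_of_add_eq_zero_right h.symm)
  -- D of zero
  have hz := hD_add (⟨0,0,0,0,0,0⟩ : Tri A M P B N C) ⟨0,0,0,0,0,0⟩
  simp [Tri.add] at hz
  have hD0 : D (⟨0,0,0,0,0,0⟩ : Tri A M P B N C) = ⟨0,0,0,0,0,0⟩ :=
    Tri.ext' (left_eq_add.mp (congrArg Tri.a hz))
      (left_eq_add.mp (congrArg Tri.m hz))
      (left_eq_add.mp (congrArg Tri.p hz))
      (left_eq_add.mp (congrArg Tri.b hz))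
      (left_eq_add.mp (congrArg Tri.n hz))
      (left_eq_add.mp (congrArg Tri.c hz))
  -- idempotent computations
  have h11 := hD_mul (⟨1,0,0,0,0,0⟩ : Tri A M P B N C) ⟨1,0,0,0,0,0⟩
  simp [Tri.mul, Tri.add, hμ0l, hμ0r] at h11
  have e1a : (D (⟨1,0,0,0,0,0⟩ : Tri A M P B N C)).a = 0 :=
    left_eq_add.mp (congrArg Tri.a h11)
  have e1b : (D (⟨1,0,0,0,0,0⟩ : Tri A M P B N C)).b = 0 := congrArg Tri.b h11
  have e1n : (D (⟨1,0,0,0,0,0⟩ : Tri A M P B N C)).n = 0 := congrArg Tri.n h11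
  have e1c : (D (⟨1,0,0,0,0,0⟩ : Tri A M P B N C)).c = 0 := congrArg Tri.c h11
  have h22 := hD_mul (⟨0,0,0,1,0,0⟩ : Tri A M P B N C) ⟨0,0,0,1,0,0⟩
  simp [Tri.mul, Tri.add, hμ0l, hμ0r] at h22
  have e2a : (D (⟨0,0,0,1,0,0⟩ : Tri A M P B N C)).a = 0 := congrArg Tri.a h22
  have e2p : (D (⟨0,0,0,1,0,0⟩ : Tri A M P B N C)).p = 0 := congrArg Tri.p h22
  have e2b : (D (⟨0,0,0,1,0,0⟩ : Tri A M P B N C)).b = 0 :=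
    left_eq_add.mp (congrArg Tri.b h22)
  have e2c : (D (⟨0,0,0,1,0,0⟩ : Tri A M P B N C)).c = 0 := congrArg Tri.c h22
  have h33 := hD_mul (⟨0,0,0,0,0,1⟩ : Tri A M P B N C) ⟨0,0,0,0,0,1⟩
  simp [Tri.mul, Tri.add, hμ0l, hμ0r] at h33
  have e3a : (D (⟨0,0,0,0,0,1⟩ : Tri A M P B N C)).a = 0 := congrArg Tri.a h33
  have e3m : (D (⟨0,0,0,0,0,1⟩ : Tri A M P B N C)).m = 0 := congrArg Tri.m h33
  have e3b : (D (⟨0,0,0,0,0,1⟩ : Tri A M P B N C)).b = 0 := congrArg Tri.b h33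
  have e3c : (D (⟨0,0,0,0,0,1⟩ : Tri A M P B N C)).c = 0 :=
    left_eq_add.mp (congrArg Tri.c h33)
  -- cross products of idempotents
  have h12 := hD_mul (⟨1,0,0,0,0,0⟩ : Tri A M P B N C) ⟨0,0,0,1,0,0⟩
  simp [Tri.mul, Tri.add, hμ0l, hμ0r] at h12
  rw [hD0] at h12
  have m2eq : (D (⟨0,0,0,1,0,0⟩ : Tri A M P B N C)).m
      = -(D (⟨1,0,0,0,0,0⟩ : Tri A M P B N C)).m := by
    have h : (D (⟨1,0,0,0,0,0⟩ : Tri A M P B N C)).m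
        + (D (⟨0,0,0,1,0,0⟩ : Tri A M P B N C)).m = 0 := (congrArg Tri.m h12).symm
    exact eq_neg_of_add_eq_zero_right h
  have h13 := hD_mul (⟨1,0,0,0,0,0⟩ : Tri A M P B N C) ⟨0,0,0,0,0,1⟩
  simp [Tri.mul, Tri.add, hμ0l, hμ0r] at h13
  rw [hD0] at h13
  have p3eq : (D (⟨0,0,0,0,0,1⟩ : Tri A M P B N C)).p
      = -(D (⟨1,0,0,0,0,0⟩ : Tri A M P B N C)).p := by
    have h : (D (⟨1,0,0,0,0,0⟩ : Tri A M P B N C)).p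
        + (D (⟨0,0,0,0,0,1⟩ : Tri A M P B N C)).p = 0 := (congrArg Tri.p h13).symm
    exact eq_neg_of_add_eq_zero_right h
  have h23 := hD_mul (⟨0,0,0,1,0,0⟩ : Tri A M P B N C) ⟨0,0,0,0,0,1⟩
  simp [Tri.mul, Tri.add, hμ0l, hμ0r] at h23
  rw [hD0] at h23
  have n3eq : (D (⟨0,0,0,0,0,1⟩ : Tri A M P B N C)).n
      = -(D (⟨0,0,0,1,0,0⟩ : Tri A M P B N C)).n := by
    have h : (D (⟨0,0,0,1,0,0⟩ : Tri A M P B N C)).n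
        + (D (⟨0,0,0,0,0,1⟩ : Tri A M P B N C)).n = 0 := (congrArg Tri.n h23).symm
    exact eq_neg_of_add_eq_zero_right h
  -- shapes on the six corners
  have F1 : ∀ a : A, D (⟨a,0,0,0,0,0⟩ : Tri A M P B N C)
      = ⟨(D (⟨a,0,0,0,0,0⟩ : Tri A M P B N C)).a,
          a • (D (⟨1,0,0,0,0,0⟩ : Tri A M P B N C)).m,
          a • (D (⟨1,0,0,0,0,0⟩ : Tri A M P B N C)).p, 0, 0, 0⟩ := by
    intro a
    have h := hD_mul (⟨a,0,0,0,0,0⟩ : Tri A M P B N C) ⟨1,0,0,0,0,0⟩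
    simp [Tri.mul, Tri.add, hμ0l, hμ0r, e1a] at h
    exact h
  have F2 : ∀ b : B, D (⟨0,0,0,b,0,0⟩ : Tri A M P B N C)
      = ⟨0, -(op b • (D (⟨1,0,0,0,0,0⟩ : Tri A M P B N C)).m), 0,
          (D (⟨0,0,0,b,0,0⟩ : Tri A M P B N C)).b,
          b • (D (⟨0,0,0,1,0,0⟩ : Tri A M P B N C)).n, 0⟩ := by
    intro b
    have h := hD_mul (⟨0,0,0,1,0,0⟩ : Tri A M P B N C) ⟨0,0,0,b,0,0⟩
    simp [Tri.mul, Tri.add, hμ0l, hμ0r, e2b] at h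
    have h' := hD_mul (⟨0,0,0,b,0,0⟩ : Tri A M P B N C) ⟨0,0,0,1,0,0⟩
    simp [Tri.mul, Tri.add, hμ0l, hμ0r, e2b] at h'
    have ha : (D (⟨0,0,0,b,0,0⟩ : Tri A M P B N C)).a = 0 := congrArg Tri.a h
    have hm : (D (⟨0,0,0,b,0,0⟩ : Tri A M P B N C)).m
        = op b • (D (⟨0,0,0,1,0,0⟩ : Tri A M P B N C)).m := congrArg Tri.m h
    have hp : (D (⟨0,0,0,b,0,0⟩ : Tri A M P B N C)).p = 0 := congrArg Tri.p h
    have hn : (D (⟨0,0,0,b,0,0⟩ : Tri A M P B N C)).n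
        = b • (D (⟨0,0,0,1,0,0⟩ : Tri A M P B N C)).n := congrArg Tri.n h'
    have hc : (D (⟨0,0,0,b,0,0⟩ : Tri A M P B N C)).c = 0 := congrArg Tri.c h
    refine Tri.ext' ha ?_ hp rfl hn hc
    rw [hm, m2eq, smul_neg]
  have F3 : ∀ c : C, D (⟨0,0,0,0,0,c⟩ : Tri A M P B N C)
      = ⟨0, 0, -(op c • (D (⟨1,0,0,0,0,0⟩ : Tri A M P B N C)).p), 0,
          -(op c • (D (⟨0,0,0,1,0,0⟩ : Tri A M P B N C)).n),
          (D (⟨0,0,0,0,0,c⟩ : Tri A M P B N C)).c⟩ := by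
    intro c
    have h := hD_mul (⟨0,0,0,0,0,1⟩ : Tri A M P B N C) ⟨0,0,0,0,0,c⟩
    simp [Tri.mul, Tri.add, hμ0l, hμ0r, e3c] at h
    have ha : (D (⟨0,0,0,0,0,c⟩ : Tri A M P B N C)).a = 0 := congrArg Tri.a h
    have hm : (D (⟨0,0,0,0,0,c⟩ : Tri A M P B N C)).m = 0 := congrArg Tri.m h
    have hb : (D (⟨0,0,0,0,0,c⟩ : Tri A M P B N C)).b = 0 := congrArg Tri.b h
    have hp : (D (⟨0,0,0,0,0,c⟩ : Tri A M P B N C)).p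
        = op c • (D (⟨0,0,0,0,0,1⟩ : Tri A M P B N C)).p := congrArg Tri.p h
    have hn : (D (⟨0,0,0,0,0,c⟩ : Tri A M P B N C)).n
        = op c • (D (⟨0,0,0,0,0,1⟩ : Tri A M P B N C)).n := congrArg Tri.n h
    refine Tri.ext' ha hm ?_ hb ?_ rfl
    · rw [hp, p3eq, smul_neg]
    · rw [hn, n3eq, smul_neg]
  have F4 : ∀ m : M, D (⟨0,m,0,0,0,0⟩ : Tri A M P B N C)
      = ⟨0, (D (⟨0,m,0,0,0,0⟩ : Tri A M P B N C)).m,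
          μ m (D (⟨0,0,0,1,0,0⟩ : Tri A M P B N C)).n, 0, 0, 0⟩ := by
    intro m
    have h := hD_mul (⟨1,0,0,0,0,0⟩ : Tri A M P B N C) ⟨0,m,0,0,0,0⟩
    simp [Tri.mul, Tri.add, hμ0l, hμ0r, e1a] at h
    have h' := hD_mul (⟨0,m,0,0,0,0⟩ : Tri A M P B N C) ⟨0,0,0,1,0,0⟩
    simp [Tri.mul, Tri.add, hμ0l, hμ0r, e2b] at h'
    have ha : (D (⟨0,m,0,0,0,0⟩ : Tri A M P B N C)).a = 0 := congrArg Tri.a h'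
    have hp : (D (⟨0,m,0,0,0,0⟩ : Tri A M P B N C)).p
        = μ m (D (⟨0,0,0,1,0,0⟩ : Tri A M P B N C)).n := congrArg Tri.p h'
    have hb : (D (⟨0,m,0,0,0,0⟩ : Tri A M P B N C)).b = 0 := congrArg Tri.b h
    have hn : (D (⟨0,m,0,0,0,0⟩ : Tri A M P B N C)).n = 0 := congrArg Tri.n h
    have hc : (D (⟨0,m,0,0,0,0⟩ : Tri A M P B N C)).c = 0 := congrArg Tri.c h
    exact Tri.ext' ha rfl hp hb hn hc
  have F5 : ∀ n : N, D (⟨0,0,0,0,n,0⟩ : Tri A M P B N C)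
      = ⟨0, 0, -(μ (D (⟨1,0,0,0,0,0⟩ : Tri A M P B N C)).m n), 0,
          (D (⟨0,0,0,0,n,0⟩ : Tri A M P B N C)).n, 0⟩ := by
    intro n
    have h := hD_mul (⟨0,0,0,1,0,0⟩ : Tri A M P B N C) ⟨0,0,0,0,n,0⟩
    simp [Tri.mul, Tri.add, hμ0l, hμ0r, e2b] at h
    have h' := hD_mul (⟨0,0,0,0,n,0⟩ : Tri A M P B N C) ⟨0,0,0,0,0,1⟩
    simp [Tri.mul, Tri.add, hμ0l, hμ0r, e3c] at h'
    have ha : (D (⟨0,0,0,0,n,0⟩ : Tri A M P B N C)).a = 0 := congrArg Tri.a h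
    have hm : (D (⟨0,0,0,0,n,0⟩ : Tri A M P B N C)).m = 0 := congrArg Tri.m h
    have hb : (D (⟨0,0,0,0,n,0⟩ : Tri A M P B N C)).b = 0 := congrArg Tri.b h'
    have hc : (D (⟨0,0,0,0,n,0⟩ : Tri A M P B N C)).c = 0 := congrArg Tri.c h
    have hp : (D (⟨0,0,0,0,n,0⟩ : Tri A M P B N C)).p
        = μ (D (⟨0,0,0,1,0,0⟩ : Tri A M P B N C)).m n := congrArg Tri.p h
    refine Tri.ext' ha hm ?_ hb rfl hc
    rw [hp, m2eq, hμnegl]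
  have F6 : ∀ p : P, D (⟨0,0,p,0,0,0⟩ : Tri A M P B N C)
      = ⟨0, 0, (D (⟨0,0,p,0,0,0⟩ : Tri A M P B N C)).p, 0, 0, 0⟩ := by
    intro p
    have h := hD_mul (⟨1,0,0,0,0,0⟩ : Tri A M P B N C) ⟨0,0,p,0,0,0⟩
    simp [Tri.mul, Tri.add, hμ0l, hμ0r, e1a] at h
    have h' := hD_mul (⟨0,0,p,0,0,0⟩ : Tri A M P B N C) ⟨0,0,0,0,0,1⟩
    simp [Tri.mul, Tri.add, hμ0l, hμ0r, e3c] at h'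
    have ha : (D (⟨0,0,p,0,0,0⟩ : Tri A M P B N C)).a = 0 := congrArg Tri.a h'
    have hm : (D (⟨0,0,p,0,0,0⟩ : Tri A M P B N C)).m = 0 := congrArg Tri.m h'
    have hb : (D (⟨0,0,p,0,0,0⟩ : Tri A M P B N C)).b = 0 := congrArg Tri.b h
    have hn : (D (⟨0,0,p,0,0,0⟩ : Tri A M P B N C)).n = 0 := congrArg Tri.n h
    have hc : (D (⟨0,0,p,0,0,0⟩ : Tri A M P B N C)).c = 0 := congrArg Tri.c h
    exact Tri.ext' ha hm rfl hb hn hc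
  refine ⟨fun a => (D ⟨a,0,0,0,0,0⟩).a, fun b => (D ⟨0,0,0,b,0,0⟩).b,
    fun c => (D ⟨0,0,0,0,0,c⟩).c, fun m => (D ⟨0,m,0,0,0,0⟩).m,
    fun p => (D ⟨0,0,p,0,0,0⟩).p, fun n => (D ⟨0,0,0,0,n,0⟩).n,
    (D ⟨1,0,0,0,0,0⟩).m, (D ⟨1,0,0,0,0,0⟩).p, (D ⟨0,0,0,1,0,0⟩).n,
    ?_, ?_, ?_, ?_, ?_, ?_, ?_, ?_, ?_, ?_⟩
  · intro a₁ a₂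
    have h := hD_add (⟨a₁,0,0,0,0,0⟩ : Tri A M P B N C) ⟨a₂,0,0,0,0,0⟩
    simp [Tri.add] at h
    exact congrArg Tri.a h
  · intro a₁ a₂
    have h := hD_mul (⟨a₁,0,0,0,0,0⟩ : Tri A M P B N C) ⟨a₂,0,0,0,0,0⟩
    simp [Tri.mul, Tri.add, hμ0l, hμ0r] at h
    exact congrArg Tri.a h
  · intro b₁ b₂
    have h := hD_add (⟨0,0,0,b₁,0,0⟩ : Tri A M P B N C) ⟨0,0,0,b₂,0,0⟩
    simp [Tri.add] at h
    exact congrArg Tri.b h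
  · intro b₁ b₂
    have h := hD_mul (⟨0,0,0,b₁,0,0⟩ : Tri A M P B N C) ⟨0,0,0,b₂,0,0⟩
    simp [Tri.mul, Tri.add, hμ0l, hμ0r] at h
    exact congrArg Tri.b h
  · intro c₁ c₂
    have h := hD_add (⟨0,0,0,0,0,c₁⟩ : Tri A M P B N C) ⟨0,0,0,0,0,c₂⟩
    simp [Tri.add] at h
    exact congrArg Tri.c h
  · intro c₁ c₂
    have h := hD_mul (⟨0,0,0,0,0,c₁⟩ : Tri A M P B N C) ⟨0,0,0,0,0,c₂⟩
    simp [Tri.mul, Tri.add, hμ0l, hμ0r] at h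
    exact congrArg Tri.c h
  · intro m₁ m₂
    have h := hD_add (⟨0,m₁,0,0,0,0⟩ : Tri A M P B N C) ⟨0,m₂,0,0,0,0⟩
    simp [Tri.add] at h
    exact congrArg Tri.m h
  · intro p₁ p₂
    have h := hD_add (⟨0,0,p₁,0,0,0⟩ : Tri A M P B N C) ⟨0,0,p₂,0,0,0⟩
    simp [Tri.add] at h
    exact congrArg Tri.p h
  · intro n₁ n₂
    have h := hD_add (⟨0,0,0,0,n₁,0⟩ : Tri A M P B N C) ⟨0,0,0,0,n₂,0⟩
    simp [Tri.add] at h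
    exact congrArg Tri.n h
  · intro t
    have hdec : t = Tri.add (Tri.add (Tri.add (Tri.add (Tri.add
        ⟨t.a,0,0,0,0,0⟩ ⟨0,t.m,0,0,0,0⟩) ⟨0,0,t.p,0,0,0⟩) ⟨0,0,0,t.b,0,0⟩)
        ⟨0,0,0,0,t.n,0⟩) ⟨0,0,0,0,0,t.c⟩ := by
      refine Tri.ext' ?_ ?_ ?_ ?_ ?_ ?_ <;> simp [Tri.add]
    conv_lhs => rw [hdec]
    rw [hD_add, hD_add, hD_add, hD_add, hD_add,
      F1 t.a, F4 t.m, F6 t.p, F2 t.b, F5 t.n, F3 t.c]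
    refine Tri.ext' ?_ ?_ ?_ ?_ ?_ ?_ <;> simp [Tri.add] <;> abel
end

section
/- Suppose A, B, C are unital and φ: M → M, θ: P → P, ψ: N → N are bimodule homomorphisms with θ(μ(m,n)) = μ(φ(m),n) + μ(m,ψ(n)). If the derivation D_{φ,θ,ψ} on T is inner, implemented by some element [[x,α,β],[0,y,γ],[0,0,z]] ∈ T, then x ∈ Z(A), y ∈ Z(B), z ∈ Z(C), and φ(m) = my − xm, θ(p) = pz − xp, ψ(n) = nz − yn for all m ∈ M, p ∈ P, n ∈ N. -/
open MulOpposite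

variable {A B C M N P : Type*} [Ring A] [Ring B] [Ring C]
  [AddCommGroup M] [AddCommGroup N] [AddCommGroup P]
  [Module A M] [Module Bᵐᵒᵖ M] [SMulCommClass A Bᵐᵒᵖ M]
  [Module B N] [Module Cᵐᵒᵖ N] [SMulCommClass B Cᵐᵒᵖ N]
  [Module A P] [Module Cᵐᵒᵖ P] [SMulCommClass A Cᵐᵒᵖ P]

/-- if the corner derivation `D_{φ,θ,ψ}` is inner, implemented by
`[[x,α,β],[0,y,γ],[0,0,z]] ∈ T`, then `x, y, z` are central and `φ(m) = my − xm`,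
`θ(p) = pz − xp`, `ψ(n) = nz − yn`. -/
theorem inner_corner_derivation_is_central_rosenblum
    (μ : M → N → P)
    (hμ_addl : ∀ (m₁ m₂ : M) (n : N), μ (m₁ + m₂) n = μ m₁ n + μ m₂ n)
    (hμ_addr : ∀ (m : M) (n₁ n₂ : N), μ m (n₁ + n₂) = μ m n₁ + μ m n₂)
    (hμA : ∀ (a : A) (m : M) (n : N), μ (a • m) n = a • μ m n)
    (hμC : ∀ (m : M) (n : N) (c : C), μ m (op c • n) = op c • μ m n)
    (hμbal : ∀ (m : M) (b : B) (n : N), μ (op b • m) n = μ m (b • n))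
    (φ : M → M) (θ : P → P) (ψ : N → N)
    (hφ_add : ∀ m₁ m₂ : M, φ (m₁ + m₂) = φ m₁ + φ m₂)
    (hφ_l : ∀ (a : A) (m : M), φ (a • m) = a • φ m)
    (hφ_r : ∀ (b : B) (m : M), φ (op b • m) = op b • φ m)
    (hθ_add : ∀ p₁ p₂ : P, θ (p₁ + p₂) = θ p₁ + θ p₂)
    (hθ_l : ∀ (a : A) (p : P), θ (a • p) = a • θ p)
    (hθ_r : ∀ (c : C) (p : P), θ (op c • p) = op c • θ p)
    (hψ_add : ∀ n₁ n₂ : N, ψ (n₁ + n₂) = ψ n₁ + ψ n₂)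
    (hψ_l : ∀ (b : B) (n : N), ψ (b • n) = b • ψ n)
    (hψ_r : ∀ (c : C) (n : N), ψ (op c • n) = op c • ψ n)
    (hcompat : ∀ (m : M) (n : N), θ (μ m n) = μ (φ m) n + μ m (ψ n))
    (x : A) (α : M) (β : P) (y : B) (γ : N) (z : C)
    (h_inner : ∀ t : Tri A M P B N C,
      (⟨0, φ t.m, θ t.p, 0, ψ t.n, 0⟩ : Tri A M P B N C)
        = Tri.add (Tri.mul μ t ⟨x, α, β, y, γ, z⟩)
            (Tri.neg (Tri.mul μ (⟨x, α, β, y, γ, z⟩ : Tri A M P B N C) t))) :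
    (∀ a : A, a * x = x * a) ∧ (∀ b : B, b * y = y * b) ∧ (∀ c : C, c * z = z * c) ∧
    (∀ m : M, φ m = op y • m - x • m) ∧
    (∀ p : P, θ p = op z • p - x • p) ∧
    (∀ n : N, ψ n = op z • n - y • n) := by
  have hμ0r : ∀ m : M, μ m 0 = 0 := fun m => by
    have h := hμ_addr m 0 0
    rw [add_zero] at h
    exact (left_eq_add.mp h)
  have hμ0l : ∀ n : N, μ 0 n = 0 := fun n => by
    have h := hμ_addl 0 0 n
    rw [add_zero] at h
    exact (left_eq_add.mp h)
  refine ⟨?_, ?_, ?_, ?_, ?_, ?_⟩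
  · intro a
    have h := congrArg Tri.a (h_inner ⟨a, 0, 0, 0, 0, 0⟩)
    simp [Tri.add, Tri.mul, Tri.neg, ← sub_eq_add_neg] at h
    exact sub_eq_zero.mp h.symm
  · intro b
    have h := congrArg Tri.b (h_inner ⟨0, 0, 0, b, 0, 0⟩)
    simp [Tri.add, Tri.mul, Tri.neg, ← sub_eq_add_neg] at h
    exact sub_eq_zero.mp h.symm
  · intro c
    have h := congrArg Tri.c (h_inner ⟨0, 0, 0, 0, 0, c⟩)
    simp [Tri.add, Tri.mul, Tri.neg, ← sub_eq_add_neg] at h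
    exact sub_eq_zero.mp h.symm
  · intro m
    have h := congrArg Tri.m (h_inner ⟨0, m, 0, 0, 0, 0⟩)
    simp [Tri.add, Tri.mul, Tri.neg, hμ0r, hμ0l] at h
    rw [h]; abel
  · intro p
    have h := congrArg Tri.p (h_inner ⟨0, 0, p, 0, 0, 0⟩)
    simp [Tri.add, Tri.mul, Tri.neg, hμ0r, hμ0l] at h
    rw [h]; abel
  · intro n
    have h := congrArg Tri.n (h_inner ⟨0, 0, 0, 0, n, 0⟩)
    simp [Tri.add, Tri.mul, Tri.neg, hμ0r, hμ0l] at h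
    rw [h]; abel
end

section
/- Assume every derivation on A, on B, and on C is inner (H¹(A)=H¹(B)=H¹(C)=0). Then every derivation D on the order-three triangular algebra T differs from an inner derivation of T by a corner derivation D_{φ,θ,ψ}; explicitly, there exist an element u ∈ T and bimodule homomorphisms φ ∈ Hom_{A,B}(M), θ ∈ Hom_{A,C}(P), ψ ∈ Hom_{B,C}(N) such that D(t) = (tu − ut) + D_{φ,θ,ψ}(t) for all t ∈ T. -/
/-!
Write `e₁, e₂, e₃` for the diagonal idempotents of `T`. The Leibniz rule applied to the products
`e_i t` and `t e_j` shows that `D` is determined by its restrictions `d_A, d_B, d_C` to the diagonal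
corners, which are derivations of `A, B, C`, by its restrictions `d_M, d_N, d_P` to the
off-diagonal corners, and by the three entries `m₀ = D(e₁)_M`, `p₀ = D(e₁)_P`, `n₀ = D(e₂)_N`.
By hypothesis `d_A, d_B, d_C` are inner, implemented by `x, y, z`. For
`u = [[x, m₀, p₀], [0, y, n₀], [0, 0, z]]` the map `t ↦ D t - (t u - u t)` vanishes on the
diagonal, and on the off-diagonal corners the twisted Leibniz rules such as
`d_M (a m) = d_A(a) m + a d_M(m)` become plain bimodule linearity once `d_A a = a x - x a`.
-/

open MulOpposite

attribute [ext] Tri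

section Pairing

variable {M N P : Type*} [AddCommGroup M] [AddCommGroup N] [AddCommGroup P] {μ : M → N → P}

structure IsBiadditive (μ : M → N → P) : Prop where
  add_left : ∀ m₁ m₂ n, μ (m₁ + m₂) n = μ m₁ n + μ m₂ n
  add_right : ∀ m n₁ n₂, μ m (n₁ + n₂) = μ m n₁ + μ m n₂

theorem IsBiadditive.zero_left (hμ : IsBiadditive μ) (n : N) : μ 0 n = 0 :=
  (AddMonoidHom.mk' (μ · n) (hμ.add_left · · n)).map_zero

theorem IsBiadditive.zero_right (hμ : IsBiadditive μ) (m : M) : μ m 0 = 0 :=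
  (AddMonoidHom.mk' (μ m) (hμ.add_right m)).map_zero

theorem IsBiadditive.neg_left (hμ : IsBiadditive μ) (m : M) (n : N) : μ (-m) n = -μ m n :=
  (AddMonoidHom.mk' (μ · n) (hμ.add_left · · n)).map_neg m

end Pairing

section Bimodule

variable {R S M : Type*} [Ring R] [Ring S] [AddCommGroup M] [Module R M] [Module Sᵐᵒᵖ M]

-- `f` minus the `M`-entry `m ↦ m y - x m` of the inner derivation `t ↦ t u - u t`.
def subAd (f : M → M) (x : R) (y : S) (m : M) : M := f m - (op y • m - x • m)

variable {f : M → M} {x : R} {y : S}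

theorem subAd_add (hf : ∀ m₁ m₂, f (m₁ + m₂) = f m₁ + f m₂) (m₁ m₂ : M) :
    subAd f x y (m₁ + m₂) = subAd f x y m₁ + subAd f x y m₂ := by
  simp only [subAd, hf, smul_add]
  abel

theorem subAd_smul [SMulCommClass R Sᵐᵒᵖ M] {δ : R → R}
    (hf : ∀ (r : R) m, f (r • m) = δ r • m + r • f m) (hδ : ∀ r, δ r = r * x - x * r)
    (r : R) (m : M) : subAd f x y (r • m) = r • subAd f x y m := by
  simp only [subAd, hf, hδ, sub_smul, mul_smul, smul_sub, smul_comm r (op y) m]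
  abel

theorem subAd_op_smul [SMulCommClass R Sᵐᵒᵖ M] {δ : S → S}
    (hf : ∀ (s : S) m, f (op s • m) = op s • f m + op (δ s) • m) (hδ : ∀ s, δ s = s * y - y * s)
    (s : S) (m : M) : subAd f x y (op s • m) = op s • subAd f x y m := by
  simp only [subAd, hf, hδ, op_sub, op_mul, sub_smul, mul_smul, smul_sub, smul_comm x (op s) m]
  abel

end Bimodule

namespace Tri

section Restrictions

variable {A B C M N P : Type*} [Zero A] [Zero B] [Zero C] [Zero M] [Zero N] [Zero P]
  (D : Tri A M P B N C → Tri A M P B N C)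

def dA (a : A) : A := (D ⟨a, 0, 0, 0, 0, 0⟩).a
def dB (b : B) : B := (D ⟨0, 0, 0, b, 0, 0⟩).b
def dC (c : C) : C := (D ⟨0, 0, 0, 0, 0, c⟩).c
def dM (m : M) : M := (D ⟨0, m, 0, 0, 0, 0⟩).m
def dN (n : N) : N := (D ⟨0, 0, 0, 0, n, 0⟩).n
def dP (p : P) : P := (D ⟨0, 0, p, 0, 0, 0⟩).p

end Restrictions

variable {A B C M N P : Type*} [Ring A] [Ring B] [Ring C]
  [AddCommGroup M] [AddCommGroup N] [AddCommGroup P]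
  [Module A M] [Module Bᵐᵒᵖ M] [Module B N] [Module Cᵐᵒᵖ N] [Module A P] [Module Cᵐᵒᵖ P]

structure IsDerivation (μ : M → N → P) (D : Tri A M P B N C → Tri A M P B N C) : Prop where
  map_add : ∀ x y, D (Tri.add x y) = Tri.add (D x) (D y)
  map_mul : ∀ x y, D (Tri.mul μ x y) = Tri.add (Tri.mul μ (D x) y) (Tri.mul μ x (D y))

namespace IsDerivation

variable {μ : M → N → P} {D : Tri A M P B N C → Tri A M P B N C}

theorem map_zero (hD : IsDerivation μ D) : D ⟨0, 0, 0, 0, 0, 0⟩ = ⟨0, 0, 0, 0, 0, 0⟩ := by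
  have h := hD.map_add ⟨0, 0, 0, 0, 0, 0⟩ ⟨0, 0, 0, 0, 0, 0⟩
  simp only [Tri.add, add_zero, Tri.ext_iff, left_eq_add] at h
  ext <;> simp [h]

theorem m_apply_e₂ (hD : IsDerivation μ D) (hμ : IsBiadditive μ) :
    (D ⟨0, 0, 0, 1, 0, 0⟩).m = -(D ⟨1, 0, 0, 0, 0, 0⟩).m := by
  have h := congrArg Tri.m (hD.map_mul ⟨1, 0, 0, 0, 0, 0⟩ ⟨0, 0, 0, 1, 0, 0⟩)
  rw [eq_neg_iff_add_eq_zero, add_comm]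
  simpa [Tri.mul, Tri.add, hμ.zero_left, hD.map_zero] using h.symm

theorem p_apply_e₃ (hD : IsDerivation μ D) (hμ : IsBiadditive μ) :
    (D ⟨0, 0, 0, 0, 0, 1⟩).p = -(D ⟨1, 0, 0, 0, 0, 0⟩).p := by
  have h := congrArg Tri.p (hD.map_mul ⟨1, 0, 0, 0, 0, 0⟩ ⟨0, 0, 0, 0, 0, 1⟩)
  rw [eq_neg_iff_add_eq_zero, add_comm]
  simpa [Tri.mul, Tri.add, hμ.zero_left, hμ.zero_right, hD.map_zero] using h.symm

theorem n_apply_e₃ (hD : IsDerivation μ D) (hμ : IsBiadditive μ) :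
    (D ⟨0, 0, 0, 0, 0, 1⟩).n = -(D ⟨0, 0, 0, 1, 0, 0⟩).n := by
  have h := congrArg Tri.n (hD.map_mul ⟨0, 0, 0, 1, 0, 0⟩ ⟨0, 0, 0, 0, 0, 1⟩)
  rw [eq_neg_iff_add_eq_zero, add_comm]
  simpa [Tri.mul, Tri.add, hμ.zero_left, hD.map_zero] using h.symm

theorem apply_cornerA (hD : IsDerivation μ D) (hμ : IsBiadditive μ) (a : A) :
    D ⟨a, 0, 0, 0, 0, 0⟩ = ⟨dA D a, a • (D ⟨1, 0, 0, 0, 0, 0⟩).m,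
      a • (D ⟨1, 0, 0, 0, 0, 0⟩).p, 0, 0, 0⟩ := by
  have h := hD.map_mul ⟨a, 0, 0, 0, 0, 0⟩ ⟨1, 0, 0, 0, 0, 0⟩
  ext <;> simp_all [Tri.mul, Tri.add, Tri.ext_iff, hμ.zero_left, hμ.zero_right, dA]

theorem apply_cornerB (hD : IsDerivation μ D) (hμ : IsBiadditive μ) (b : B) :
    D ⟨0, 0, 0, b, 0, 0⟩ = ⟨0, -(op b • (D ⟨1, 0, 0, 0, 0, 0⟩).m), 0, dB D b,
      b • (D ⟨0, 0, 0, 1, 0, 0⟩).n, 0⟩ := by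
  have h₁ := hD.map_mul ⟨0, 0, 0, 1, 0, 0⟩ ⟨0, 0, 0, b, 0, 0⟩
  have h₂ := hD.map_mul ⟨0, 0, 0, b, 0, 0⟩ ⟨0, 0, 0, 1, 0, 0⟩
  ext <;> simp_all [Tri.mul, Tri.add, Tri.ext_iff, hμ.zero_left, hμ.zero_right, dB,
    hD.m_apply_e₂ hμ]

theorem apply_cornerC (hD : IsDerivation μ D) (hμ : IsBiadditive μ) (c : C) :
    D ⟨0, 0, 0, 0, 0, c⟩ = ⟨0, 0, -(op c • (D ⟨1, 0, 0, 0, 0, 0⟩).p), 0,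
      -(op c • (D ⟨0, 0, 0, 1, 0, 0⟩).n), dC D c⟩ := by
  have h := hD.map_mul ⟨0, 0, 0, 0, 0, 1⟩ ⟨0, 0, 0, 0, 0, c⟩
  ext <;> simp_all [Tri.mul, Tri.add, Tri.ext_iff, hμ.zero_left, hμ.zero_right, dC,
    hD.p_apply_e₃ hμ, hD.n_apply_e₃ hμ]

theorem apply_cornerM (hD : IsDerivation μ D) (hμ : IsBiadditive μ) (m : M) :
    D ⟨0, m, 0, 0, 0, 0⟩ = ⟨0, dM D m, μ m (D ⟨0, 0, 0, 1, 0, 0⟩).n, 0, 0, 0⟩ := by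
  have h₁ := hD.map_mul ⟨1, 0, 0, 0, 0, 0⟩ ⟨0, m, 0, 0, 0, 0⟩
  have h₂ := hD.map_mul ⟨0, m, 0, 0, 0, 0⟩ ⟨0, 0, 0, 1, 0, 0⟩
  ext <;> simp_all [Tri.mul, Tri.add, Tri.ext_iff, hμ.zero_left, hμ.zero_right, dM]

theorem apply_cornerN (hD : IsDerivation μ D) (hμ : IsBiadditive μ) (n : N) :
    D ⟨0, 0, 0, 0, n, 0⟩ = ⟨0, 0, -μ (D ⟨1, 0, 0, 0, 0, 0⟩).m n, 0, dN D n, 0⟩ := by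
  have h₁ := hD.map_mul ⟨0, 0, 0, 1, 0, 0⟩ ⟨0, 0, 0, 0, n, 0⟩
  have h₂ := hD.map_mul ⟨0, 0, 0, 0, n, 0⟩ ⟨0, 0, 0, 0, 0, 1⟩
  ext <;> simp_all [Tri.mul, Tri.add, Tri.ext_iff, hμ.zero_left, dN, hD.m_apply_e₂ hμ, hμ.neg_left]

theorem apply_cornerP (hD : IsDerivation μ D) (hμ : IsBiadditive μ) (p : P) :
    D ⟨0, 0, p, 0, 0, 0⟩ = ⟨0, 0, dP D p, 0, 0, 0⟩ := by
  have h₁ := hD.map_mul ⟨1, 0, 0, 0, 0, 0⟩ ⟨0, 0, p, 0, 0, 0⟩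
  have h₂ := hD.map_mul ⟨0, 0, p, 0, 0, 0⟩ ⟨0, 0, 0, 0, 0, 1⟩
  ext <;> simp_all [Tri.mul, Tri.add, Tri.ext_iff, hμ.zero_left, hμ.zero_right, dP]

theorem dA_add (hD : IsDerivation μ D) (a₁ a₂ : A) :
    dA D (a₁ + a₂) = dA D a₁ + dA D a₂ := by
  simpa [dA, Tri.add] using congrArg Tri.a (hD.map_add ⟨a₁, 0, 0, 0, 0, 0⟩ ⟨a₂, 0, 0, 0, 0, 0⟩)

theorem dB_add (hD : IsDerivation μ D) (b₁ b₂ : B) :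
    dB D (b₁ + b₂) = dB D b₁ + dB D b₂ := by
  simpa [dB, Tri.add] using congrArg Tri.b (hD.map_add ⟨0, 0, 0, b₁, 0, 0⟩ ⟨0, 0, 0, b₂, 0, 0⟩)

theorem dC_add (hD : IsDerivation μ D) (c₁ c₂ : C) :
    dC D (c₁ + c₂) = dC D c₁ + dC D c₂ := by
  simpa [dC, Tri.add] using congrArg Tri.c (hD.map_add ⟨0, 0, 0, 0, 0, c₁⟩ ⟨0, 0, 0, 0, 0, c₂⟩)

theorem dM_add (hD : IsDerivation μ D) (m₁ m₂ : M) :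
    dM D (m₁ + m₂) = dM D m₁ + dM D m₂ := by
  simpa [dM, Tri.add] using congrArg Tri.m (hD.map_add ⟨0, m₁, 0, 0, 0, 0⟩ ⟨0, m₂, 0, 0, 0, 0⟩)

theorem dN_add (hD : IsDerivation μ D) (n₁ n₂ : N) :
    dN D (n₁ + n₂) = dN D n₁ + dN D n₂ := by
  simpa [dN, Tri.add] using congrArg Tri.n (hD.map_add ⟨0, 0, 0, 0, n₁, 0⟩ ⟨0, 0, 0, 0, n₂, 0⟩)

theorem dP_add (hD : IsDerivation μ D) (p₁ p₂ : P) :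
    dP D (p₁ + p₂) = dP D p₁ + dP D p₂ := by
  simpa [dP, Tri.add] using congrArg Tri.p (hD.map_add ⟨0, 0, p₁, 0, 0, 0⟩ ⟨0, 0, p₂, 0, 0, 0⟩)

theorem dA_mul (hD : IsDerivation μ D) (hμ : IsBiadditive μ) (a₁ a₂ : A) :
    dA D (a₁ * a₂) = dA D a₁ * a₂ + a₁ * dA D a₂ := by
  simpa [dA, Tri.add, Tri.mul, hμ.zero_left] using
    congrArg Tri.a (hD.map_mul ⟨a₁, 0, 0, 0, 0, 0⟩ ⟨a₂, 0, 0, 0, 0, 0⟩)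

theorem dB_mul (hD : IsDerivation μ D) (hμ : IsBiadditive μ) (b₁ b₂ : B) :
    dB D (b₁ * b₂) = dB D b₁ * b₂ + b₁ * dB D b₂ := by
  simpa [dB, Tri.add, Tri.mul, hμ.zero_left] using
    congrArg Tri.b (hD.map_mul ⟨0, 0, 0, b₁, 0, 0⟩ ⟨0, 0, 0, b₂, 0, 0⟩)

theorem dC_mul (hD : IsDerivation μ D) (hμ : IsBiadditive μ) (c₁ c₂ : C) :
    dC D (c₁ * c₂) = dC D c₁ * c₂ + c₁ * dC D c₂ := by
  simpa [dC, Tri.add, Tri.mul, hμ.zero_left] using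
    congrArg Tri.c (hD.map_mul ⟨0, 0, 0, 0, 0, c₁⟩ ⟨0, 0, 0, 0, 0, c₂⟩)

theorem dM_smul (hD : IsDerivation μ D) (hμ : IsBiadditive μ) (a : A) (m : M) :
    dM D (a • m) = dA D a • m + a • dM D m := by
  simpa [dA, dM, Tri.add, Tri.mul, hμ.zero_left] using
    congrArg Tri.m (hD.map_mul ⟨a, 0, 0, 0, 0, 0⟩ ⟨0, m, 0, 0, 0, 0⟩)

theorem dM_op_smul (hD : IsDerivation μ D) (hμ : IsBiadditive μ) (b : B) (m : M) :
    dM D (op b • m) = op b • dM D m + op (dB D b) • m := by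
  simpa [dB, dM, Tri.add, Tri.mul, hμ.zero_right] using
    congrArg Tri.m (hD.map_mul ⟨0, m, 0, 0, 0, 0⟩ ⟨0, 0, 0, b, 0, 0⟩)

theorem dN_smul (hD : IsDerivation μ D) (hμ : IsBiadditive μ) (b : B) (n : N) :
    dN D (b • n) = dB D b • n + b • dN D n := by
  simpa [dB, dN, Tri.add, Tri.mul, hμ.zero_left] using
    congrArg Tri.n (hD.map_mul ⟨0, 0, 0, b, 0, 0⟩ ⟨0, 0, 0, 0, n, 0⟩)

theorem dN_op_smul (hD : IsDerivation μ D) (hμ : IsBiadditive μ) (c : C) (n : N) :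
    dN D (op c • n) = op c • dN D n + op (dC D c) • n := by
  simpa [dC, dN, Tri.add, Tri.mul, hμ.zero_left] using
    congrArg Tri.n (hD.map_mul ⟨0, 0, 0, 0, n, 0⟩ ⟨0, 0, 0, 0, 0, c⟩)

theorem dP_smul (hD : IsDerivation μ D) (hμ : IsBiadditive μ) (a : A) (p : P) :
    dP D (a • p) = dA D a • p + a • dP D p := by
  simpa [dA, dP, Tri.add, Tri.mul, hμ.zero_left, hμ.zero_right] using
    congrArg Tri.p (hD.map_mul ⟨a, 0, 0, 0, 0, 0⟩ ⟨0, 0, p, 0, 0, 0⟩)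

theorem dP_op_smul (hD : IsDerivation μ D) (hμ : IsBiadditive μ) (c : C) (p : P) :
    dP D (op c • p) = op c • dP D p + op (dC D c) • p := by
  simpa [dC, dP, Tri.add, Tri.mul, hμ.zero_left, hμ.zero_right] using
    congrArg Tri.p (hD.map_mul ⟨0, 0, p, 0, 0, 0⟩ ⟨0, 0, 0, 0, 0, c⟩)

theorem apply_eq (hD : IsDerivation μ D) (hμ : IsBiadditive μ) (t : Tri A M P B N C) :
    D t = ⟨dA D t.a,
      t.a • (D ⟨1, 0, 0, 0, 0, 0⟩).m - op t.b • (D ⟨1, 0, 0, 0, 0, 0⟩).m + dM D t.m,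
      t.a • (D ⟨1, 0, 0, 0, 0, 0⟩).p - op t.c • (D ⟨1, 0, 0, 0, 0, 0⟩).p
        + μ t.m (D ⟨0, 0, 0, 1, 0, 0⟩).n - μ (D ⟨1, 0, 0, 0, 0, 0⟩).m t.n + dP D t.p,
      dB D t.b,
      t.b • (D ⟨0, 0, 0, 1, 0, 0⟩).n - op t.c • (D ⟨0, 0, 0, 1, 0, 0⟩).n + dN D t.n,
      dC D t.c⟩ := by
  obtain ⟨a, m, p, b, n, c⟩ := t
  have hsplit : (⟨a, m, p, b, n, c⟩ : Tri A M P B N C) =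
      Tri.add ⟨a, 0, 0, 0, 0, 0⟩ (Tri.add ⟨0, m, 0, 0, 0, 0⟩ (Tri.add ⟨0, 0, p, 0, 0, 0⟩
        (Tri.add ⟨0, 0, 0, b, 0, 0⟩ (Tri.add ⟨0, 0, 0, 0, n, 0⟩ ⟨0, 0, 0, 0, 0, c⟩)))) := by
    simp [Tri.add]
  conv_lhs => rw [hsplit]
  simp only [hD.map_add]
  rw [hD.apply_cornerA hμ a, hD.apply_cornerM hμ m, hD.apply_cornerP hμ p,
    hD.apply_cornerB hμ b, hD.apply_cornerN hμ n, hD.apply_cornerC hμ c]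
  ext <;> simp only [Tri.add] <;> abel

end IsDerivation
end Tri

variable {A B C M N P : Type*} [Ring A] [Ring B] [Ring C]
  [AddCommGroup M] [AddCommGroup N] [AddCommGroup P]
  [Module A M] [Module Bᵐᵒᵖ M] [SMulCommClass A Bᵐᵒᵖ M]
  [Module B N] [Module Cᵐᵒᵖ N] [SMulCommClass B Cᵐᵒᵖ N]
  [Module A P] [Module Cᵐᵒᵖ P] [SMulCommClass A Cᵐᵒᵖ P]

theorem derivation_inner_plus_corner_general
    (μ : M → N → P)
    (hμ_addl : ∀ (m₁ m₂ : M) (n : N), μ (m₁ + m₂) n = μ m₁ n + μ m₂ n)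
    (hμ_addr : ∀ (m : M) (n₁ n₂ : N), μ m (n₁ + n₂) = μ m n₁ + μ m n₂)
    (D : Tri A M P B N C → Tri A M P B N C)
    (hD_add : ∀ x y, D (Tri.add x y) = Tri.add (D x) (D y))
    (hD_mul : ∀ x y, D (Tri.mul μ x y) = Tri.add (Tri.mul μ (D x) y) (Tri.mul μ x (D y)))
    (hInnA : ∀ dA : A → A, (∀ a₁ a₂, dA (a₁ + a₂) = dA a₁ + dA a₂) →
      (∀ a₁ a₂, dA (a₁ * a₂) = dA a₁ * a₂ + a₁ * dA a₂) →
      ∃ x : A, ∀ a, dA a = a * x - x * a)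
    (hInnB : ∀ dB : B → B, (∀ b₁ b₂, dB (b₁ + b₂) = dB b₁ + dB b₂) →
      (∀ b₁ b₂, dB (b₁ * b₂) = dB b₁ * b₂ + b₁ * dB b₂) →
      ∃ y : B, ∀ b, dB b = b * y - y * b)
    (hInnC : ∀ dC : C → C, (∀ c₁ c₂, dC (c₁ + c₂) = dC c₁ + dC c₂) →
      (∀ c₁ c₂, dC (c₁ * c₂) = dC c₁ * c₂ + c₁ * dC c₂) →
      ∃ z : C, ∀ c, dC c = c * z - z * c) :
    ∃ (u : Tri A M P B N C) (φ : M → M) (θ : P → P) (ψ : N → N),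
      (∀ m₁ m₂ : M, φ (m₁ + m₂) = φ m₁ + φ m₂) ∧
      (∀ (a : A) (m : M), φ (a • m) = a • φ m) ∧
      (∀ (b : B) (m : M), φ (op b • m) = op b • φ m) ∧
      (∀ p₁ p₂ : P, θ (p₁ + p₂) = θ p₁ + θ p₂) ∧
      (∀ (a : A) (p : P), θ (a • p) = a • θ p) ∧
      (∀ (c : C) (p : P), θ (op c • p) = op c • θ p) ∧
      (∀ n₁ n₂ : N, ψ (n₁ + n₂) = ψ n₁ + ψ n₂) ∧
      (∀ (b : B) (n : N), ψ (b • n) = b • ψ n) ∧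
      (∀ (c : C) (n : N), ψ (op c • n) = op c • ψ n) ∧
      (∀ t : Tri A M P B N C,
        D t = Tri.add (Tri.add (Tri.mul μ t u) (Tri.neg (Tri.mul μ u t)))
          ⟨0, φ t.m, θ t.p, 0, ψ t.n, 0⟩) := by
  have hμ : IsBiadditive μ := ⟨hμ_addl, hμ_addr⟩
  have hD : Tri.IsDerivation μ D := ⟨hD_add, hD_mul⟩
  obtain ⟨x, hx⟩ := hInnA _ hD.dA_add (hD.dA_mul hμ)
  obtain ⟨y, hy⟩ := hInnB _ hD.dB_add (hD.dB_mul hμ)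
  obtain ⟨z, hz⟩ := hInnC _ hD.dC_add (hD.dC_mul hμ)
  refine ⟨⟨x, (D ⟨1, 0, 0, 0, 0, 0⟩).m, (D ⟨1, 0, 0, 0, 0, 0⟩).p, y, (D ⟨0, 0, 0, 1, 0, 0⟩).n, z⟩,
    subAd (Tri.dM D) x y, subAd (Tri.dP D) x z, subAd (Tri.dN D) y z,
    subAd_add hD.dM_add, subAd_smul (hD.dM_smul hμ) hx, subAd_op_smul (hD.dM_op_smul hμ) hy,
    subAd_add hD.dP_add, subAd_smul (hD.dP_smul hμ) hx, subAd_op_smul (hD.dP_op_smul hμ) hz,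
    subAd_add hD.dN_add, subAd_smul (hD.dN_smul hμ) hy, subAd_op_smul (hD.dN_op_smul hμ) hz,
    fun t => ?_⟩
  rw [hD.apply_eq hμ t]
  ext <;> simp only [Tri.add, Tri.mul, Tri.neg, subAd, hx, hy, hz] <;> abel

/-- if every derivation of `A`, of `B` and of `C` is inner, then every
derivation `D` of the order-three triangular algebra `T` differs from an inner derivation
of `T` by a corner derivation `D_{φ,θ,ψ}` built from bimodule homomorphisms
`φ ∈ Hom_{A,B}(M)`, `θ ∈ Hom_{A,C}(P)`, `ψ ∈ Hom_{B,C}(N)`. -/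
theorem derivation_inner_plus_corner
    (μ : M → N → P)
    (hμ_addl : ∀ (m₁ m₂ : M) (n : N), μ (m₁ + m₂) n = μ m₁ n + μ m₂ n)
    (hμ_addr : ∀ (m : M) (n₁ n₂ : N), μ m (n₁ + n₂) = μ m n₁ + μ m n₂)
    (hμA : ∀ (a : A) (m : M) (n : N), μ (a • m) n = a • μ m n)
    (hμC : ∀ (m : M) (n : N) (c : C), μ m (op c • n) = op c • μ m n)
    (hμbal : ∀ (m : M) (b : B) (n : N), μ (op b • m) n = μ m (b • n))
    (D : Tri A M P B N C → Tri A M P B N C)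
    (hD_add : ∀ x y, D (Tri.add x y) = Tri.add (D x) (D y))
    (hD_mul : ∀ x y, D (Tri.mul μ x y) = Tri.add (Tri.mul μ (D x) y) (Tri.mul μ x (D y)))
    (hInnA : ∀ dA : A → A, (∀ a₁ a₂, dA (a₁ + a₂) = dA a₁ + dA a₂) →
      (∀ a₁ a₂, dA (a₁ * a₂) = dA a₁ * a₂ + a₁ * dA a₂) →
      ∃ x : A, ∀ a, dA a = a * x - x * a)
    (hInnB : ∀ dB : B → B, (∀ b₁ b₂, dB (b₁ + b₂) = dB b₁ + dB b₂) →
      (∀ b₁ b₂, dB (b₁ * b₂) = dB b₁ * b₂ + b₁ * dB b₂) →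
      ∃ y : B, ∀ b, dB b = b * y - y * b)
    (hInnC : ∀ dC : C → C, (∀ c₁ c₂, dC (c₁ + c₂) = dC c₁ + dC c₂) →
      (∀ c₁ c₂, dC (c₁ * c₂) = dC c₁ * c₂ + c₁ * dC c₂) →
      ∃ z : C, ∀ c, dC c = c * z - z * c) :
    ∃ (u : Tri A M P B N C) (φ : M → M) (θ : P → P) (ψ : N → N),
      (∀ m₁ m₂ : M, φ (m₁ + m₂) = φ m₁ + φ m₂) ∧
      (∀ (a : A) (m : M), φ (a • m) = a • φ m) ∧
      (∀ (b : B) (m : M), φ (op b • m) = op b • φ m) ∧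
      (∀ p₁ p₂ : P, θ (p₁ + p₂) = θ p₁ + θ p₂) ∧
      (∀ (a : A) (p : P), θ (a • p) = a • θ p) ∧
      (∀ (c : C) (p : P), θ (op c • p) = op c • θ p) ∧
      (∀ n₁ n₂ : N, ψ (n₁ + n₂) = ψ n₁ + ψ n₂) ∧
      (∀ (b : B) (n : N), ψ (b • n) = b • ψ n) ∧
      (∀ (c : C) (n : N), ψ (op c • n) = op c • ψ n) ∧
      (∀ t : Tri A M P B N C,
        D t = Tri.add (Tri.add (Tri.mul μ t u) (Tri.neg (Tri.mul μ u t)))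
          ⟨0, φ t.m, θ t.p, 0, ψ t.n, 0⟩) :=
  derivation_inner_plus_corner_general μ hμ_addl hμ_addr D hD_add hD_mul hInnA hInnB hInnC
end

section
/- Let D be a derivation on the order-three triangular algebra T with A, B, C unital, and let m_D, p_D, n_D be the corner entries of D(E_A) and D(E_B) as above, with D_A(a) = ax − xa, D_B(b) = by − yb, D_C(c) = cz − zc inner. Then the map D_0 defined by D_0(t) = t·u − u·t with u = [[x, m_D, p_D],[0, y, n_D],[0, 0, z]] satisfies: D − D_0 is a derivation of T whose diagonal components vanish and whose corner components φ = τ_M − τ_M^{x,y}, θ = τ_P − τ_P^{x,z}, ψ = τ_N − τ_N^{y,z} are bimodule homomorphisms (φ ∈ Hom_{A,B}(M), θ ∈ Hom_{A,C}(P), ψ ∈ Hom_{B,C}(N)). -/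
open MulOpposite

variable {A B C M N P : Type*} [Ring A] [Ring B] [Ring C]
  [AddCommGroup M] [AddCommGroup N] [AddCommGroup P]
  [Module A M] [Module Bᵐᵒᵖ M] [SMulCommClass A Bᵐᵒᵖ M]
  [Module B N] [Module Cᵐᵒᵖ N] [SMulCommClass B Cᵐᵒᵖ N]
  [Module A P] [Module Cᵐᵒᵖ P] [SMulCommClass A Cᵐᵒᵖ P]

/-- if `D` has the canonical decomposition with inner diagonal parts
`D_A = ad x`, `D_B = ad y`, `D_C = ad z`, then `D` equals the inner derivation
implemented by `u = [[x,m_D,p_D],[0,y,n_D],[0,0,z]]` plus a corner derivation whose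
components `φ = τ_M − τ_M^{x,y}`, `θ = τ_P − τ_P^{x,z}`, `ψ = τ_N − τ_N^{y,z}` are
bimodule homomorphisms. -/
theorem derivation_minus_inner_is_corner
    (μ : M → N → P)
    (hμ_addl : ∀ (m₁ m₂ : M) (n : N), μ (m₁ + m₂) n = μ m₁ n + μ m₂ n)
    (hμ_addr : ∀ (m : M) (n₁ n₂ : N), μ m (n₁ + n₂) = μ m n₁ + μ m n₂)
    (hμA : ∀ (a : A) (m : M) (n : N), μ (a • m) n = a • μ m n)
    (hμC : ∀ (m : M) (n : N) (c : C), μ m (op c • n) = op c • μ m n)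
    (hμbal : ∀ (m : M) (b : B) (n : N), μ (op b • m) n = μ m (b • n))
    (D : Tri A M P B N C → Tri A M P B N C)
    (hD_add : ∀ x y, D (Tri.add x y) = Tri.add (D x) (D y))
    (hD_mul : ∀ x y, D (Tri.mul μ x y) = Tri.add (Tri.mul μ (D x) y) (Tri.mul μ x (D y)))
    (x : A) (y : B) (z : C) (mD : M) (pD : P) (nD : N)
    (DA : A → A) (DB : B → B) (DC : C → C)
    (τM : M → M) (τP : P → P) (τN : N → N)
    (hDA : ∀ a : A, DA a = a * x - x * a)
    (hDB : ∀ b : B, DB b = b * y - y * b)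
    (hDC : ∀ c : C, DC c = c * z - z * c)
    (hD : ∀ t : Tri A M P B N C,
      D t = ⟨DA t.a,
             t.a • mD - op t.b • mD + τM t.m,
             t.a • pD - op t.c • pD - μ mD t.n + μ t.m nD + τP t.p,
             DB t.b,
             t.b • nD - op t.c • nD + τN t.n,
             DC t.c⟩) :
    (∀ t : Tri A M P B N C,
      D t = Tri.add
          (Tri.add (Tri.mul μ t ⟨x, mD, pD, y, nD, z⟩)
            (Tri.neg (Tri.mul μ (⟨x, mD, pD, y, nD, z⟩ : Tri A M P B N C) t)))
          ⟨0, τM t.m - (op y • t.m - x • t.m), τP t.p - (op z • t.p - x • t.p), 0,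
            τN t.n - (op z • t.n - y • t.n), 0⟩) ∧
    (∀ m₁ m₂ : M, (τM (m₁ + m₂) - (op y • (m₁ + m₂) - x • (m₁ + m₂)))
        = (τM m₁ - (op y • m₁ - x • m₁)) + (τM m₂ - (op y • m₂ - x • m₂))) ∧
    (∀ (a : A) (m : M), τM (a • m) - (op y • (a • m) - x • (a • m))
        = a • (τM m - (op y • m - x • m))) ∧
    (∀ (b : B) (m : M), τM (op b • m) - (op y • (op b • m) - x • (op b • m))
        = op b • (τM m - (op y • m - x • m))) ∧
    (∀ p₁ p₂ : P, (τP (p₁ + p₂) - (op z • (p₁ + p₂) - x • (p₁ + p₂)))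
        = (τP p₁ - (op z • p₁ - x • p₁)) + (τP p₂ - (op z • p₂ - x • p₂))) ∧
    (∀ (a : A) (p : P), τP (a • p) - (op z • (a • p) - x • (a • p))
        = a • (τP p - (op z • p - x • p))) ∧
    (∀ (c : C) (p : P), τP (op c • p) - (op z • (op c • p) - x • (op c • p))
        = op c • (τP p - (op z • p - x • p))) ∧
    (∀ n₁ n₂ : N, (τN (n₁ + n₂) - (op z • (n₁ + n₂) - y • (n₁ + n₂)))
        = (τN n₁ - (op z • n₁ - y • n₁)) + (τN n₂ - (op z • n₂ - y • n₂))) ∧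
    (∀ (b : B) (n : N), τN (b • n) - (op z • (b • n) - y • (b • n))
        = b • (τN n - (op z • n - y • n))) ∧
    (∀ (c : C) (n : N), τN (op c • n) - (op z • (op c • n) - y • (op c • n))
        = op c • (τN n - (op z • n - y • n))) := by

  -- zeros of μ
  have hμ0r : ∀ m : M, μ m 0 = 0 := by
    intro m
    have h := hμ_addr m 0 0
    rw [add_zero] at h
    exact (left_eq_add.mp h)
  have hμ0l : ∀ n : N, μ 0 n = 0 := by
    intro n
    have h := hμ_addl 0 0 n
    rw [add_zero] at h
    exact (left_eq_add.mp h)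
  have hτM0 : τM 0 = 0 := by
    have h := congrArg Tri.m (hD_add (⟨0,0,0,0,0,0⟩ : Tri A M P B N C) ⟨0,0,0,0,0,0⟩)
    simp [Tri.add, hD] at h
    exact h
  have hτP0 : τP 0 = 0 := by
    have h := congrArg Tri.p (hD_add (⟨0,0,0,0,0,0⟩ : Tri A M P B N C) ⟨0,0,0,0,0,0⟩)
    simp [Tri.add, hD, hμ0r, hμ0l] at h
    exact h
  have hτN0 : τN 0 = 0 := by
    have h := congrArg Tri.n (hD_add (⟨0,0,0,0,0,0⟩ : Tri A M P B N C) ⟨0,0,0,0,0,0⟩)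
    simp [Tri.add, hD] at h
    exact h
  -- additivity
  have hτM_add : ∀ m₁ m₂ : M, τM (m₁ + m₂) = τM m₁ + τM m₂ := by
    intro m₁ m₂
    have h := congrArg Tri.m (hD_add (⟨0,m₁,0,0,0,0⟩ : Tri A M P B N C) ⟨0,m₂,0,0,0,0⟩)
    simpa [Tri.add, hD] using h
  have hτP_add : ∀ p₁ p₂ : P, τP (p₁ + p₂) = τP p₁ + τP p₂ := by
    intro p₁ p₂
    have h := congrArg Tri.p (hD_add (⟨0,0,p₁,0,0,0⟩ : Tri A M P B N C) ⟨0,0,p₂,0,0,0⟩)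
    simpa [Tri.add, hD, hμ0r, hμ0l] using h
  have hτN_add : ∀ n₁ n₂ : N, τN (n₁ + n₂) = τN n₁ + τN n₂ := by
    intro n₁ n₂
    have h := congrArg Tri.n (hD_add (⟨0,0,0,0,n₁,0⟩ : Tri A M P B N C) ⟨0,0,0,0,n₂,0⟩)
    simpa [Tri.add, hD] using h
  -- module identities
  have hτM_a : ∀ (a : A) (m : M), τM (a • m) = DA a • m + a • τM m := by
    intro a m
    have h := congrArg Tri.m (hD_mul (⟨a,0,0,0,0,0⟩ : Tri A M P B N C) ⟨0,m,0,0,0,0⟩)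
    simpa [Tri.add, Tri.mul, hD, hμ0r, hμ0l, hτM0, hτP0, hτN0] using h
  have hτM_b : ∀ (b : B) (m : M), τM (op b • m) = op (DB b) • m + op b • τM m := by
    intro b m
    have h := congrArg Tri.m (hD_mul (⟨0,m,0,0,0,0⟩ : Tri A M P B N C) ⟨0,0,0,b,0,0⟩)
    simpa [Tri.add, Tri.mul, hD, hμ0r, hμ0l, hτM0, hτP0, hτN0, add_comm] using h
  have hτP_a : ∀ (a : A) (p : P), τP (a • p) = DA a • p + a • τP p := by
    intro a p
    have h := congrArg Tri.p (hD_mul (⟨a,0,0,0,0,0⟩ : Tri A M P B N C) ⟨0,0,p,0,0,0⟩)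
    simpa [Tri.add, Tri.mul, hD, hμ0r, hμ0l, hτM0, hτP0, hτN0] using h
  have hτP_c : ∀ (c : C) (p : P), τP (op c • p) = op (DC c) • p + op c • τP p := by
    intro c p
    have h := congrArg Tri.p (hD_mul (⟨0,0,p,0,0,0⟩ : Tri A M P B N C) ⟨0,0,0,0,0,c⟩)
    simpa [Tri.add, Tri.mul, hD, hμ0r, hμ0l, hτM0, hτP0, hτN0, add_comm] using h
  have hτN_b : ∀ (b : B) (n : N), τN (b • n) = DB b • n + b • τN n := by
    intro b n
    have h := congrArg Tri.n (hD_mul (⟨0,0,0,b,0,0⟩ : Tri A M P B N C) ⟨0,0,0,0,n,0⟩)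
    simpa [Tri.add, Tri.mul, hD, hμ0r, hμ0l, hτM0, hτP0, hτN0] using h
  have hτN_c : ∀ (c : C) (n : N), τN (op c • n) = op (DC c) • n + op c • τN n := by
    intro c n
    have h := congrArg Tri.n (hD_mul (⟨0,0,0,0,n,0⟩ : Tri A M P B N C) ⟨0,0,0,0,0,c⟩)
    simpa [Tri.add, Tri.mul, hD, hμ0r, hμ0l, hτM0, hτP0, hτN0, add_comm] using h
  refine ⟨?_, ?_, ?_, ?_, ?_, ?_, ?_, ?_, ?_, ?_⟩
  · intro t
    rw [hD t]
    simp only [Tri.add, Tri.mul, Tri.neg, Tri.mk.injEq]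
    refine ⟨?_, ?_, ?_, ?_, ?_, ?_⟩
    · rw [hDA]; abel
    · abel
    · abel
    · rw [hDB]; abel
    · abel
    · rw [hDC]; abel
  · intro m₁ m₂; rw [hτM_add, smul_add, smul_add]; abel
  · intro a m
    rw [hτM_a, hDA, sub_smul, mul_smul, mul_smul, smul_sub, smul_sub,
      smul_comm a (op y) m]
    abel
  · intro b m
    rw [hτM_b, hDB]
    have h1 : op (b * y - y * b) • m = op y • op b • m - op b • op y • m := by
      rw [op_sub, sub_smul, op_mul, op_mul, mul_smul, mul_smul]
    rw [h1, smul_sub, smul_sub, smul_comm x (op b) m]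
    abel
  · intro p₁ p₂; rw [hτP_add, smul_add, smul_add]; abel
  · intro a p
    rw [hτP_a, hDA, sub_smul, mul_smul, mul_smul, smul_sub, smul_sub,
      smul_comm a (op z) p]
    abel
  · intro c p
    rw [hτP_c, hDC]
    have h1 : op (c * z - z * c) • p = op z • op c • p - op c • op z • p := by
      rw [op_sub, sub_smul, op_mul, op_mul, mul_smul, mul_smul]
    rw [h1, smul_sub, smul_sub, smul_comm x (op c) p]
    abel
  · intro n₁ n₂; rw [hτN_add, smul_add, smul_add]; abel
  · intro b n
    rw [hτN_b, hDB, sub_smul, mul_smul, mul_smul, smul_sub, smul_sub,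
      smul_comm b (op z) n]
    abel
  · intro c n
    rw [hτN_c, hDC]
    have h1 : op (c * z - z * c) • n = op z • op c • n - op c • op z • n := by
      rw [op_sub, sub_smul, op_mul, op_mul, mul_smul, mul_smul]
    rw [h1, smul_sub, smul_sub, smul_comm y (op c) n]
    abel
end
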